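/- arXiv:2102.09948 — 7 statements merged into one kernel-verified Lean document; each statement's English description precedes it below -/
import Mathlib

section
/- With three panel periods t ∈ {0,1,2} and treatment D i t = [G i ∧ t = 2], the two-way fixed effects coefficient β̂ (minimizing Σ_i Σ_{t=0}^{2} (Y i t − α i − δ t − β D i t)²) equals (1/2)·τ̂_DID + (1/2)·τ̂_DID(2,0), where τ̂_DID = (1/n₁)Σ_{G i}(Y i 2 − Y i 1) − (1/n₀)Σ_{¬G i}(Y i 2 − Y i 1) and τ̂_DID(2,0) = (1/n₁)Σ_{G i}(Y i 2 − Y i 0) − (1/n₀)Σ_{¬G i}(Y i 2 − Y i 0). -/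
/-!
The treatment dummy factors as `D i t = g i * e t` (group indicator times post-period indicator),
and the two-way demeaning of such a product is the product `(g i - ḡ) * (e t - 1/3)` of the
centred factors. Since the centred factors sum to zero, this regressor is orthogonal to every
unit and time effect, so it may be paired with `Y` itself rather than with its demeaning. The
period factor weights `Y i 2` by `2/3` and `Y i 0`, `Y i 1` by `-1/3`, which is one third of
`Δ i = (Y i 2 - Y i 1) + (Y i 2 - Y i 0)`; what is left is the least-squares slope of `Δ` on a
centred group indicator, and that slope is the difference of the two group means of `Δ`.
-/

open Finset

/-- Two-way demeaning of a panel variable. -/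
noncomputable def twoWayDemean (n T : ℕ) (X : Fin n → Fin T → ℝ) : Fin n → Fin T → ℝ :=
  fun i t => X i t - (∑ s, X i s) / T - (∑ j, X j t) / n + (∑ j, ∑ s, X j s) / (T * n)

lemma sum_sub_sum_div_card_eq_zero {m : ℕ} (b : Fin m → ℝ) :
    ∑ t, (b t - (∑ s, b s) / m) = 0 := by
  rcases Nat.eq_zero_or_pos m with rfl | hm
  · simp
  · rw [sum_sub_distrib, sum_const, card_univ, Fintype.card_fin, nsmul_eq_mul,
      mul_div_cancel₀ _ (by positivity), sub_self]

lemma sum_sum_mul_mul_sub_sub_add_of_sum_eq_zero {ι κ : Type*} [Fintype ι] [Fintype κ]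
    {α : ι → ℝ} {β : κ → ℝ} (hα : ∑ i, α i = 0) (hβ : ∑ t, β t = 0)
    (Y : ι → κ → ℝ) (r : ι → ℝ) (c : κ → ℝ) (k : ℝ) :
    ∑ i, ∑ t, α i * β t * (Y i t - r i - c t + k) = ∑ i, ∑ t, α i * β t * Y i t := by
  have hr : ∑ i, ∑ t, α i * β t * r i = 0 := by
    simp_rw [mul_right_comm (α _) (β _) (r _), ← mul_sum, hβ, mul_zero, sum_const_zero]
  have hc : ∑ i, ∑ t, α i * β t * c t = 0 := by
    rw [sum_comm]
    simp_rw [mul_assoc, ← sum_mul, hα, zero_mul, sum_const_zero]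
  have hk : ∑ i, ∑ t, α i * β t * k = 0 := by
    simp_rw [← sum_mul]
    rw [← sum_mul_sum, hα, zero_mul, zero_mul]
  simp only [mul_add, mul_sub, sum_add_distrib, sum_sub_distrib, hr, hc, hk, sub_zero, add_zero]

section Separable

variable {n T : ℕ} (a : Fin n → ℝ) (b : Fin T → ℝ)

lemma twoWayDemean_mul_apply (i : Fin n) (t : Fin T) :
    twoWayDemean n T (fun i t => a i * b t) i t
      = (a i - (∑ j, a j) / n) * (b t - (∑ s, b s) / T) := by
  simp only [twoWayDemean, ← mul_sum, ← sum_mul]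
  ring

lemma sum_twoWayDemean_mul_twoWayDemean (Y : Fin n → Fin T → ℝ) :
    ∑ i, ∑ t, twoWayDemean n T (fun i t => a i * b t) i t * twoWayDemean n T Y i t
      = ∑ i, (a i - (∑ j, a j) / n) * ∑ t, (b t - (∑ s, b s) / T) * Y i t := by
  simp only [twoWayDemean_mul_apply]
  unfold twoWayDemean
  rw [sum_sum_mul_mul_sub_sub_add_of_sum_eq_zero (sum_sub_sum_div_card_eq_zero a)
    (sum_sub_sum_div_card_eq_zero b)]
  simp only [mul_sum, mul_assoc]

lemma sum_twoWayDemean_mul_sq :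
    ∑ i, ∑ t, twoWayDemean n T (fun i t => a i * b t) i t ^ 2
      = (∑ i, (a i - (∑ j, a j) / n) ^ 2) * ∑ t, (b t - (∑ s, b s) / T) ^ 2 := by
  simp only [twoWayDemean_mul_apply, mul_pow, sum_mul_sum]

end Separable

section Indicator

variable {ι : Type*} [Fintype ι] (G : ι → Bool)

noncomputable def centeredIndicator (i : ι) : ℝ :=
  (if G i = true then 1 else 0) - (∑ j, if G j = true then (1 : ℝ) else 0) / Fintype.card ι

lemma card_eq_card_filter_true_add_card_filter_false :
    Fintype.card ι = #{i | G i = true} + #{i | G i = false} := by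
  rw [← card_univ, ← card_filter_add_card_filter_not (fun i => G i = true)]
  simp only [Bool.not_eq_true]

lemma sum_centeredIndicator_mul (c : ι → ℝ) (hι : Fintype.card ι ≠ 0) :
    ∑ i, centeredIndicator G i * c i
      = (#{i | G i = false} * ∑ i ∈ {i | G i = true}, c i
          - #{i | G i = true} * ∑ i ∈ {i | G i = false}, c i) / Fintype.card ι := by
  have hsplit := sum_filter_add_sum_filter_not univ (fun i => G i = true) c
  simp only [Bool.not_eq_true] at hsplit
  have hind : ∑ j, (if G j = true then (1 : ℝ) else 0) = #{i | G i = true} := by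
    rw [sum_boole]
  have hind_mul :
      ∑ i, (if G i = true then (1 : ℝ) else 0) * c i = ∑ i ∈ {i | G i = true}, c i := by
    simp only [ite_mul, one_mul, zero_mul, ← sum_filter]
  have hcard : (Fintype.card ι : ℝ) = #{i | G i = true} + #{i | G i = false} := mod_cast
    card_eq_card_filter_true_add_card_filter_false G
  have hι' : (Fintype.card ι : ℝ) ≠ 0 := Nat.cast_ne_zero.mpr hι
  simp only [centeredIndicator, sub_mul, sum_sub_distrib, hind_mul, hind]
  rw [← mul_sum, ← hsplit]
  rw [hcard] at hι' ⊢
  field_simp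
  ring

lemma sum_centeredIndicator_sq (hι : Fintype.card ι ≠ 0) :
    ∑ i, centeredIndicator G i ^ 2
      = #{i | G i = true} * #{i | G i = false} / Fintype.card ι := by
  set m := (∑ j, if G j = true then (1 : ℝ) else 0) / Fintype.card ι
  have htrue : ∀ i ∈ ({i | G i = true} : Finset ι), centeredIndicator G i = 1 - m :=
    fun i hi => by simp only [centeredIndicator, (mem_filter.1 hi).2, if_true, m]
  have hfalse : ∀ i ∈ ({i | G i = false} : Finset ι), centeredIndicator G i = 0 - m :=
    fun i hi => by
      simp only [centeredIndicator, (mem_filter.1 hi).2, Bool.false_eq_true, if_false, m]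
  simp only [sq, sum_centeredIndicator_mul G _ hι, sum_congr rfl htrue, sum_congr rfl hfalse,
    sum_const, nsmul_eq_mul]
  ring

lemma sum_centeredIndicator_mul_div_sum_sq (c : ι → ℝ) (h1 : 0 < #{i | G i = true})
    (h0 : 0 < #{i | G i = false}) :
    (∑ i, centeredIndicator G i * c i) / ∑ i, centeredIndicator G i ^ 2
      = 1 / (#{i | G i = true} : ℝ) * ∑ i ∈ {i | G i = true}, c i
        - 1 / (#{i | G i = false} : ℝ) * ∑ i ∈ {i | G i = false}, c i := by
  have hι : Fintype.card ι ≠ 0 := by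
    rw [card_eq_card_filter_true_add_card_filter_false G]; omega
  rw [sum_centeredIndicator_mul G c hι, sum_centeredIndicator_sq G hι]
  field_simp

end Indicator

/-- With three panel periods and D i t = [G i ∧ t = 2], the two-way
fixed effects coefficient (via the demeaned least-squares formula) equals the equally
weighted average of the two DID estimators τ̂_DID and τ̂_DID(2,0). -/
theorem twoway_fe_eq_extended_did
    (n : ℕ) (Y : Fin n → Fin 3 → ℝ) (G : Fin n → Bool)
    (n1 n0 : ℕ)
    (hn1 : n1 = (univ.filter (fun i => G i = true)).card)
    (hn0 : n0 = (univ.filter (fun i => G i = false)).card)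
    (hn1pos : 0 < n1) (hn0pos : 0 < n0)
    (D : Fin n → Fin 3 → ℝ)
    (hD : ∀ i t, D i t = if G i = true ∧ t = 2 then (1:ℝ) else 0)
    (βhat : ℝ)
    (hβ : βhat = (∑ i, ∑ t, twoWayDemean n 3 D i t * twoWayDemean n 3 Y i t)
                  / (∑ i, ∑ t, (twoWayDemean n 3 D i t)^2)) :
    βhat = (1/2) * ((1 / (n1:ℝ)) * ∑ i ∈ univ.filter (fun i => G i = true), (Y i 2 - Y i 1)
                    - (1 / (n0:ℝ)) * ∑ i ∈ univ.filter (fun i => G i = false), (Y i 2 - Y i 1))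
         + (1/2) * ((1 / (n1:ℝ)) * ∑ i ∈ univ.filter (fun i => G i = true), (Y i 2 - Y i 0)
                    - (1 / (n0:ℝ)) * ∑ i ∈ univ.filter (fun i => G i = false), (Y i 2 - Y i 0)) := by
  subst hn1 hn0 hβ
  set g : Fin n → ℝ := fun i => if G i = true then 1 else 0
  set e : Fin 3 → ℝ := fun t => if t = 2 then 1 else 0
  have hD_mul : D = fun i t => g i * e t :=
    funext₂ fun i t => by rw [hD, ite_zero_mul_ite_zero, mul_one]
  have hcenter : ∀ i, g i - (∑ j, g j) / n = centeredIndicator G i := by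
    simp [g, centeredIndicator]
  have hperiod : ∀ i, ∑ t, (e t - (∑ s, e s) / (3 : ℕ)) * Y i t
      = ((Y i 2 - Y i 1) + (Y i 2 - Y i 0)) / 3 := by
    intro i
    simp only [e, Fin.sum_univ_three, sum_ite_eq', mem_univ, if_true, Fin.reduceEq, if_false]
    ring
  have hperiod_sq : ∑ t, (e t - (∑ s, e s) / (3 : ℕ)) ^ 2 = 2 / 3 := by
    simp only [e, Fin.sum_univ_three, sum_ite_eq', mem_univ, if_true, Fin.reduceEq, if_false]
    norm_num
  rw [hD_mul, sum_twoWayDemean_mul_twoWayDemean, sum_twoWayDemean_mul_sq]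
  simp only [hcenter, hperiod, hperiod_sq, ← mul_div_assoc, ← sum_div]
  rw [show ∀ S Q : ℝ, S / 3 / (Q * 2 / 3) = 1 / 2 * (S / Q) by intros; ring,
    sum_centeredIndicator_mul_div_sum_sq G _ hn1pos hn0pos]
  simp only [sum_add_distrib]
  ring
end

section
/- For repeated cross-sections over three periods t ∈ {0,1,2} with observation indicators O : Fin n → Fin 3 → Bool, group indicator G, and treatment D i t = [G i ∧ t=2], the coefficient β̂ in the least squares minimizing Σ_i Σ_t O_{it}(Y_{it} − θ·[G i] − γ_t − β D_{it})² equals λ·τ̂_DID + (1−λ)·τ̂_DID(2,0), where λ = n₁₁n₀₁(n₁₀+n₀₀) / (n₁₁n₀₁(n₁₀+n₀₀) + n₁₀n₀₀(n₁₁+n₀₁)), τ̂_DID and τ̂_DID(2,0) are the DID estimators based on periods (1,2) and (0,2) respectively with group-period means. -/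
open Finset
open Finset

lemma quad_nonneg_imp (a b : ℝ) (h : ∀ ε : ℝ, 0 ≤ a * ε^2 + b * ε) : b = 0 := by
  have h1 := h 1
  have h2 := h (-1)
  have ha : 0 ≤ a := by nlinarith
  have hd : (0:ℝ) < 2*a+2 := by linarith
  have h3 := h (-(b / (2*a+2)))
  have e : a * (-(b / (2*a+2)))^2 + b * (-(b / (2*a+2)))
      = -(b^2*(a+2))/(2*a+2)^2 := by field_simp; ring
  rw [e] at h3
  have h4 : 0 ≤ -(b^2*(a+2)) := by
    have := (div_nonneg_iff.mp h3)
    rcases this with ⟨h,_⟩|⟨h,h'⟩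
    · exact h
    · nlinarith
  nlinarith [sq_nonneg b]

lemma foc {n : ℕ} (w f x : Fin n → Fin 3 → ℝ)
    (h : ∀ ε : ℝ, ∑ i, ∑ t, w i t * (f i t)^2 ≤ ∑ i, ∑ t, w i t * (f i t - ε * x i t)^2) :
    ∑ i, ∑ t, w i t * f i t * x i t = 0 := by
  have expand : ∀ ε : ℝ, ∑ i, ∑ t, w i t * (f i t - ε * x i t)^2
      = ∑ i, ∑ t, w i t * (f i t)^2
        + ((∑ i, ∑ t, w i t * (x i t)^2) * ε^2 + (-2 * ∑ i, ∑ t, w i t * f i t * x i t) * ε) := by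
    intro ε
    have pt : ∀ (i : Fin n) (t : Fin 3), w i t * (f i t - ε * x i t)^2
        = w i t * (f i t)^2 + ((w i t * (x i t)^2) * ε^2 + (-2 * (w i t * f i t * x i t)) * ε) := by
      intros; ring
    simp_rw [pt, Finset.sum_add_distrib, ← Finset.sum_mul, Finset.mul_sum]
  have key : ∀ ε : ℝ, 0 ≤ (∑ i, ∑ t, w i t * (x i t)^2) * ε^2
      + (-2 * ∑ i, ∑ t, w i t * f i t * x i t) * ε := by
    intro ε
    have h' := h ε
    rw [expand ε] at h'
    linarith
  have := quad_nonneg_imp _ _ key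
  linarith

lemma solve_beta (n10 n00 n11 n01 n12 n02 S10 S00 S11 S01 S12 S02 θ γ0 γ1 γ2 β lam : ℝ)
    (p10 : 0 < n10) (p00 : 0 < n00) (p11 : 0 < n11) (p01 : 0 < n01) (p12 : 0 < n12) (p02 : 0 < n02)
    (e0 : S10 - n10*(θ+γ0) + (S00 - n00*γ0) = 0)
    (e1 : S11 - n11*(θ+γ1) + (S01 - n01*γ1) = 0)
    (e2 : S12 - n12*(θ+γ2+β) + (S02 - n02*γ2) = 0)
    (eθ : (S10 - n10*(θ+γ0)) + (S11 - n11*(θ+γ1)) + (S12 - n12*(θ+γ2+β)) = 0)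
    (eβ : S12 - n12*(θ+γ2+β) = 0)
    (hlam : lam = n11*n01*(n10+n00) / (n11*n01*(n10+n00) + n10*n00*(n11+n01))) :
    β = lam * ((S12/n12 - S11/n11) - (S02/n02 - S01/n01))
      + (1-lam) * ((S12/n12 - S10/n10) - (S02/n02 - S00/n00)) := by
  have hden : 0 < n11*n01*(n10+n00) + n10*n00*(n11+n01) := by positivity
  have hθ : θ * (n11*n01*(n10+n00) + n10*n00*(n11+n01))
      = (n11+n01)*(n00*S10 - n10*S00) + (n10+n00)*(n01*S11 - n11*S01) := by
    linear_combination (n10*(n11+n01))*e0 + (n11*(n10+n00))*e1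
      - (n11+n01)*(n10+n00)*eθ + (n11+n01)*(n10+n00)*eβ
  have hθ' : θ = ((n11+n01)*(n00*S10 - n10*S00) + (n10+n00)*(n01*S11 - n11*S01))
      / (n11*n01*(n10+n00) + n10*n00*(n11+n01)) := by
    rw [eq_div_iff hden.ne']; exact hθ
  have hγ2 : γ2 = S02/n02 := by
    rw [eq_div_iff p02.ne']; linarith
  have hβ : β = S12/n12 - S02/n02 - θ := by
    rw [← hγ2]
    have : n12*(θ+γ2+β) = S12 := by linarith
    field_simp
    linarith [this]
  rw [hβ, hθ', hlam]
  field_simp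
  ring
open Finset

lemma cell_sum {n : ℕ} (G : Fin n → Bool) (O : Fin n → Fin 3 → Bool) (t : Fin 3) (f : Fin n → ℝ) :
    ∑ i, (if O i t then (1:ℝ) else 0) * f i
    = (∑ i ∈ univ.filter (fun i => G i = true ∧ O i t = true), f i)
    + ∑ i ∈ univ.filter (fun i => G i = false ∧ O i t = true), f i := by
  rw [Finset.sum_filter, Finset.sum_filter, ← Finset.sum_add_distrib]
  refine Finset.sum_congr rfl fun i _ => ?_
  cases hG : G i <;> cases hO : O i t <;> simp [hG, hO]

lemma cell_sum_g {n : ℕ} (G : Fin n → Bool) (O : Fin n → Fin 3 → Bool) (t : Fin 3) (f : Fin n → ℝ) :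
    ∑ i, (if O i t then (1:ℝ) else 0) * f i * (if G i then (1:ℝ) else 0)
    = ∑ i ∈ univ.filter (fun i => G i = true ∧ O i t = true), f i := by
  rw [Finset.sum_filter]
  refine Finset.sum_congr rfl fun i _ => ?_
  cases hG : G i <;> cases hO : O i t <;> simp [hG, hO]

lemma cell_eval {n : ℕ} (G : Fin n → Bool) (O : Fin n → Fin 3 → Bool) (g : Bool) (t : Fin 3)
    (f : Fin n → ℝ) (Y : Fin n → Fin 3 → ℝ) (C : ℝ) (m : ℕ)
    (hm : m = (univ.filter (fun i => G i = g ∧ O i t = true)).card)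
    (hf : ∀ i, G i = g → f i = Y i t - C) :
    ∑ i ∈ univ.filter (fun i => G i = g ∧ O i t = true), f i
    = (∑ i ∈ univ.filter (fun i => G i = g ∧ O i t = true), Y i t) - (m:ℝ) * C := by
  rw [Finset.sum_congr rfl (fun i hi => hf i (Finset.mem_filter.mp hi).2.1),
    Finset.sum_sub_distrib, Finset.sum_const, nsmul_eq_mul, hm]

/-- For repeated cross-sections over three periods, the regression
coefficient β̂ equals λ·τ̂_DID + (1−λ)·τ̂_DID(2,0) with λ determined by group-period
sample sizes. -/
theorem repeated_cross_section_regression_eq_weighted_did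
    (n : ℕ) (Y : Fin n → Fin 3 → ℝ) (G : Fin n → Bool) (O : Fin n → Fin 3 → Bool)
    (ncount : Bool → Fin 3 → ℕ)
    (hcount : ∀ g t, ncount g t = (univ.filter (fun i => G i = g ∧ O i t = true)).card)
    (hpos : ∀ g t, 0 < ncount g t)
    (D : Fin n → Fin 3 → ℝ)
    (hD : ∀ i t, D i t = if G i = true ∧ t = 2 then (1:ℝ) else 0)
    (lam : ℝ)
    (hlam : lam = ((ncount true 1 : ℝ) * ncount false 1 * ((ncount true 0 : ℝ) + ncount false 0))
        / ((ncount true 1 : ℝ) * ncount false 1 * ((ncount true 0 : ℝ) + ncount false 0)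
          + (ncount true 0 : ℝ) * ncount false 0 * ((ncount true 1 : ℝ) + ncount false 1)))
    (θ : ℝ) (γ : Fin 3 → ℝ) (β : ℝ)
    (hmin : ∀ (θ' : ℝ) (γ' : Fin 3 → ℝ) (β' : ℝ),
      ∑ i, ∑ t, (if O i t then (1:ℝ) else 0) *
        (Y i t - θ * (if G i then (1:ℝ) else 0) - γ t - β * D i t)^2
      ≤ ∑ i, ∑ t, (if O i t then (1:ℝ) else 0) *
        (Y i t - θ' * (if G i then (1:ℝ) else 0) - γ' t - β' * D i t)^2) :
    β = lam *
        (((∑ i ∈ univ.filter (fun i => G i = true ∧ O i 2 = true), Y i 2) / ncount true 2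
          - (∑ i ∈ univ.filter (fun i => G i = true ∧ O i 1 = true), Y i 1) / ncount true 1)
        - ((∑ i ∈ univ.filter (fun i => G i = false ∧ O i 2 = true), Y i 2) / ncount false 2
          - (∑ i ∈ univ.filter (fun i => G i = false ∧ O i 1 = true), Y i 1) / ncount false 1))
      + (1 - lam) *
        (((∑ i ∈ univ.filter (fun i => G i = true ∧ O i 2 = true), Y i 2) / ncount true 2
          - (∑ i ∈ univ.filter (fun i => G i = true ∧ O i 0 = true), Y i 0) / ncount true 0)
        - ((∑ i ∈ univ.filter (fun i => G i = false ∧ O i 2 = true), Y i 2) / ncount false 2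
          - (∑ i ∈ univ.filter (fun i => G i = false ∧ O i 0 = true), Y i 0) / ncount false 0)) := by
  have hD0 : ∀ i, D i 0 = 0 := by
    intro i; rw [hD i 0, if_neg]; rintro ⟨-, h⟩; exact absurd h (by decide)
  have hD1 : ∀ i, D i 1 = 0 := by
    intro i; rw [hD i 1, if_neg]; rintro ⟨-, h⟩; exact absurd h (by decide)
  have hD2 : ∀ i, D i 2 = if G i then (1:ℝ) else 0 := by
    intro i; rw [hD i 2]; by_cases h : G i = true <;> simp [h]
  -- FOC in θ direction
  have Fθ : ∑ i, ∑ t, (if O i t then (1:ℝ) else 0) *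
      (Y i t - θ * (if G i then (1:ℝ) else 0) - γ t - β * D i t) * (if G i then (1:ℝ) else 0) = 0 := by
    refine foc _ _ _ (fun ε => ?_)
    have h := hmin (θ + ε) γ β
    have pt : ∀ (i : Fin n) (t : Fin 3),
        Y i t - (θ + ε) * (if G i then (1:ℝ) else 0) - γ t - β * D i t
        = (Y i t - θ * (if G i then (1:ℝ) else 0) - γ t - β * D i t)
          - ε * (if G i then (1:ℝ) else 0) := by intros; ring
    simp_rw [pt] at h
    exact h
  -- FOC in γ t0 direction
  have Ft : ∀ t0 : Fin 3, ∑ i, ∑ t, (if O i t then (1:ℝ) else 0) *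
      (Y i t - θ * (if G i then (1:ℝ) else 0) - γ t - β * D i t) * (if t = t0 then (1:ℝ) else 0) = 0 := by
    intro t0
    refine foc _ _ _ (fun ε => ?_)
    have h := hmin θ (fun s => γ s + ε * (if s = t0 then (1:ℝ) else 0)) β
    have pt : ∀ (i : Fin n) (t : Fin 3),
        Y i t - θ * (if G i then (1:ℝ) else 0) - (γ t + ε * (if t = t0 then (1:ℝ) else 0)) - β * D i t
        = (Y i t - θ * (if G i then (1:ℝ) else 0) - γ t - β * D i t)
          - ε * (if t = t0 then (1:ℝ) else 0) := by intros; ring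
    simp_rw [pt] at h
    exact h
  -- FOC in β direction
  have Fβ : ∑ i, ∑ t, (if O i t then (1:ℝ) else 0) *
      (Y i t - θ * (if G i then (1:ℝ) else 0) - γ t - β * D i t) * D i t = 0 := by
    refine foc _ _ _ (fun ε => ?_)
    have h := hmin θ γ (β + ε)
    have pt : ∀ (i : Fin n) (t : Fin 3),
        Y i t - θ * (if G i then (1:ℝ) else 0) - γ t - (β + ε) * D i t
        = (Y i t - θ * (if G i then (1:ℝ) else 0) - γ t - β * D i t)
          - ε * D i t := by intros; ring
    simp_rw [pt] at h
    exact h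

  have P : ∀ g t, (0:ℝ) < (ncount g t : ℝ) := fun g t => by exact_mod_cast hpos g t
  -- period FOCs
  have E0 : (∑ i ∈ univ.filter (fun i => G i = true ∧ O i 0 = true), Y i 0)
        - (ncount true 0 : ℝ) * (θ + γ 0)
      + ((∑ i ∈ univ.filter (fun i => G i = false ∧ O i 0 = true), Y i 0)
        - (ncount false 0 : ℝ) * γ 0) = 0 := by
    have h := Ft 0
    simp only [Fin.sum_univ_three, show ((0:Fin 3) = 0) ↔ True by simp,
      show ((1:Fin 3) = 0) ↔ False by decide, show ((2:Fin 3) = 0) ↔ False by decide,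
      if_true, if_false, mul_one, mul_zero, Finset.sum_const_zero, add_zero, zero_add] at h
    rw [cell_sum G O 0 (fun i => Y i 0 - θ * (if G i then (1:ℝ) else 0) - γ 0 - β * D i 0),
      cell_eval G O true 0 _ Y (θ + γ 0) (ncount true 0) (hcount true 0)
        (fun i hi => by simp only [hi, if_true, hD0, mul_zero, mul_one]; ring),
      cell_eval G O false 0 _ Y (γ 0) (ncount false 0) (hcount false 0)
        (fun i hi => by simp only [hi, hD0, mul_zero]; norm_num)] at h
    exact h
  have E1 : (∑ i ∈ univ.filter (fun i => G i = true ∧ O i 1 = true), Y i 1)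
        - (ncount true 1 : ℝ) * (θ + γ 1)
      + ((∑ i ∈ univ.filter (fun i => G i = false ∧ O i 1 = true), Y i 1)
        - (ncount false 1 : ℝ) * γ 1) = 0 := by
    have h := Ft 1
    simp only [Fin.sum_univ_three, show ((1:Fin 3) = 1) ↔ True by simp,
      show ((0:Fin 3) = 1) ↔ False by decide, show ((2:Fin 3) = 1) ↔ False by decide,
      if_true, if_false, mul_one, mul_zero, Finset.sum_const_zero, add_zero, zero_add] at h
    rw [cell_sum G O 1 (fun i => Y i 1 - θ * (if G i then (1:ℝ) else 0) - γ 1 - β * D i 1),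
      cell_eval G O true 1 _ Y (θ + γ 1) (ncount true 1) (hcount true 1)
        (fun i hi => by simp only [hi, if_true, hD1, mul_zero, mul_one]; ring),
      cell_eval G O false 1 _ Y (γ 1) (ncount false 1) (hcount false 1)
        (fun i hi => by simp only [hi, hD1, mul_zero]; norm_num)] at h
    exact h
  have E2 : (∑ i ∈ univ.filter (fun i => G i = true ∧ O i 2 = true), Y i 2)
        - (ncount true 2 : ℝ) * (θ + γ 2 + β)
      + ((∑ i ∈ univ.filter (fun i => G i = false ∧ O i 2 = true), Y i 2)
        - (ncount false 2 : ℝ) * γ 2) = 0 := by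
    have h := Ft 2
    simp only [Fin.sum_univ_three, show ((2:Fin 3) = 2) ↔ True by simp,
      show ((0:Fin 3) = 2) ↔ False by decide, show ((1:Fin 3) = 2) ↔ False by decide,
      if_true, if_false, mul_one, mul_zero, Finset.sum_const_zero, add_zero, zero_add] at h
    rw [cell_sum G O 2 (fun i => Y i 2 - θ * (if G i then (1:ℝ) else 0) - γ 2 - β * D i 2),
      cell_eval G O true 2 _ Y (θ + γ 2 + β) (ncount true 2) (hcount true 2)
        (fun i hi => by simp only [hi, if_true, hD2, mul_one]; ring),
      cell_eval G O false 2 _ Y (γ 2) (ncount false 2) (hcount false 2)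
        (fun i hi => by simp only [hi, hD2, if_true]; norm_num)] at h
    exact h
  -- group FOC
  have Eθ' : (∑ i ∈ univ.filter (fun i => G i = true ∧ O i 0 = true), Y i 0)
        - (ncount true 0 : ℝ) * (θ + γ 0)
      + ((∑ i ∈ univ.filter (fun i => G i = true ∧ O i 1 = true), Y i 1)
        - (ncount true 1 : ℝ) * (θ + γ 1))
      + ((∑ i ∈ univ.filter (fun i => G i = true ∧ O i 2 = true), Y i 2)
        - (ncount true 2 : ℝ) * (θ + γ 2 + β)) = 0 := by
    have h := Fθ
    rw [Finset.sum_comm] at h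
    simp only [Fin.sum_univ_three] at h
    rw [cell_sum_g G O 0 (fun i => Y i 0 - θ * (if G i then (1:ℝ) else 0) - γ 0 - β * D i 0),
      cell_sum_g G O 1 (fun i => Y i 1 - θ * (if G i then (1:ℝ) else 0) - γ 1 - β * D i 1),
      cell_sum_g G O 2 (fun i => Y i 2 - θ * (if G i then (1:ℝ) else 0) - γ 2 - β * D i 2),
      cell_eval G O true 0 _ Y (θ + γ 0) (ncount true 0) (hcount true 0)
        (fun i hi => by simp only [hi, if_true, hD0, mul_zero, mul_one]; ring),
      cell_eval G O true 1 _ Y (θ + γ 1) (ncount true 1) (hcount true 1)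
        (fun i hi => by simp only [hi, if_true, hD1, mul_zero, mul_one]; ring),
      cell_eval G O true 2 _ Y (θ + γ 2 + β) (ncount true 2) (hcount true 2)
        (fun i hi => by simp only [hi, if_true, hD2, mul_one]; ring)] at h
    exact h
  -- treatment FOC
  have Eβ' : (∑ i ∈ univ.filter (fun i => G i = true ∧ O i 2 = true), Y i 2)
      - (ncount true 2 : ℝ) * (θ + γ 2 + β) = 0 := by
    have h := Fβ
    rw [Finset.sum_comm] at h
    simp only [Fin.sum_univ_three, hD0, hD1, hD2, mul_zero, Finset.sum_const_zero,
      zero_add, add_zero] at h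
    rw [cell_sum_g G O 2 (fun i => Y i 2 - θ * (if G i then (1:ℝ) else 0) - γ 2
        - β * (if G i then (1:ℝ) else 0)),
      cell_eval G O true 2 _ Y (θ + γ 2 + β) (ncount true 2) (hcount true 2)
        (fun i hi => by simp only [hi, if_true, mul_one]; ring)] at h
    exact h
  exact solve_beta _ _ _ _ _ _ _ _ _ _ _ _ θ (γ 0) (γ 1) (γ 2) β lam
    (P true 0) (P false 0) (P true 1) (P false 1) (P true 2) (P false 2)
    E0 E1 E2 Eθ' Eβ' hlam
end

section
/- In the three-period panel setting, the sequential DID estimator τ̂_sDID = [(1/n₁)Σ_{G}(Y_{i2}−Y_{i1}) − (1/n₀)Σ_{¬G}(Y_{i2}−Y_{i1})] − [(1/n₁)Σ_{G}(Y_{i1}−Y_{i0}) − (1/n₀)Σ_{¬G}(Y_{i1}−Y_{i0})] equals the two-way fixed effects coefficient β̂ from regressing the first-differenced outcome ΔY_{it} = Y_{it} − Y_{i,t−1} on unit fixed effects, time fixed effects, and D_{it} = [G i ∧ t = 2] over t ∈ {1,2}. -/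
/-!
The least-squares coefficients satisfy the normal equations: the residual is orthogonal to every
direction in which the parameters can be moved. The unit effects make each unit's two residuals
cancel, and the time effect together with the treatment dummy make the period-1 residuals sum to
zero within the treated and within the control group. Hence in each group the average of
`ΔY i 1 - ΔY i 0` is `δ 1 - δ 0`, plus `β` for the treated, and the difference of the two
averages, which is the sequential DID estimator, is `β`.
-/

open Finset

theorem sum_mul_eq_zero_of_forall_sum_sq_le {ι : Type*} [Fintype ι] (r v : ι → ℝ)
    (h : ∀ ε : ℝ, ∑ i, r i ^ 2 ≤ ∑ i, (r i - ε * v i) ^ 2) :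
    ∑ i, r i * v i = 0 := by
  have hquad : ∀ ε : ℝ, 0 ≤ (∑ i, v i ^ 2) * (ε * ε) + (-2 * ∑ i, r i * v i) * ε + 0 := by
    intro ε
    have hexpand : ∑ i, (r i - ε * v i) ^ 2
        = ∑ i, r i ^ 2 - 2 * ε * ∑ i, r i * v i + ε ^ 2 * ∑ i, v i ^ 2 := by
      simp only [mul_sum, ← sum_sub_distrib, ← sum_add_distrib]
      exact sum_congr rfl fun _ _ => by ring
    linarith [h ε]
  have hdiscrim := discrim_le_zero hquad
  rw [discrim] at hdiscrim
  nlinarith [sq_nonneg (∑ i, r i * v i)]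

section TwoWayFixedEffects

variable {ι κ : Type*} [Fintype ι] [Fintype κ]

def twfeResidual (y D : ι → κ → ℝ) (α : ι → ℝ) (δ : κ → ℝ) (β : ℝ) (i : ι) (t : κ) : ℝ :=
  y i t - α i - δ t - β * D i t

def twfeSSR (y D : ι → κ → ℝ) (α : ι → ℝ) (δ : κ → ℝ) (β : ℝ) : ℝ :=
  ∑ i, ∑ t, twfeResidual y D α δ β i t ^ 2

def IsTWFEFit (y D : ι → κ → ℝ) (α : ι → ℝ) (δ : κ → ℝ) (β : ℝ) : Prop :=
  ∀ α' δ' β', twfeSSR y D α δ β ≤ twfeSSR y D α' δ' β'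

variable {y D : ι → κ → ℝ} {α : ι → ℝ} {δ : κ → ℝ} {β : ℝ}

theorem twfeResidual_normal_equation
    (hfit : IsTWFEFit y D α δ β)
    (a : ι → ℝ) (d : κ → ℝ) (b : ℝ) :
    ∑ i, ∑ t, twfeResidual y D α δ β i t * (a i + d t + b * D i t) = 0 := by
  simp only [← Fintype.sum_prod_type']
  refine sum_mul_eq_zero_of_forall_sum_sq_le _ (fun p : ι × κ => a p.1 + d p.2 + b * D p.1 p.2)
    fun ε => ?_
  have hε := hfit (α + ε • a) (δ + ε • d) (β + ε * b)
  simp only [twfeSSR, ← Fintype.sum_prod_type'] at hε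
  refine hε.trans_eq (sum_congr rfl fun p _ => ?_)
  simp only [twfeResidual, Pi.add_apply, Pi.smul_apply, smul_eq_mul]
  ring

theorem sum_twfeResidual_eq_zero [DecidableEq ι]
    (hfit : IsTWFEFit y D α δ β) (i : ι) :
    ∑ t, twfeResidual y D α δ β i t = 0 := by
  simpa [Pi.single_apply] using twfeResidual_normal_equation hfit (Pi.single i 1) 0 0

theorem sum_filter_twfeResidual_eq_zero [DecidableEq κ] {G : ι → Bool} {t₁ : κ}
    (hD : D = fun i t => if G i = true ∧ t = t₁ then 1 else 0)
    (hfit : IsTWFEFit y D α δ β) (g : Bool) :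
    ∑ i ∈ univ.filter (fun i => G i = g), twfeResidual y D α δ β i t₁ = 0 := by
  -- treated: move `β`; control: move `δ t₁` up and `β` down by the same amount
  have hdir : ∀ i t, (0 : ι → ℝ) i + (if g then 0 else Pi.single t₁ 1 : κ → ℝ) t
      + (if g then 1 else -1) * D i t = if G i = g ∧ t = t₁ then 1 else 0 := by
    intro i t
    subst hD
    by_cases ht : t = t₁ <;> cases g <;> cases hG : G i <;> simp [ht, hG]
  have h := twfeResidual_normal_equation hfit 0 (if g then 0 else Pi.single t₁ 1)
    (if g then 1 else -1)
  simp only [hdir] at h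
  simpa [ite_and, sum_filter] using h

end TwoWayFixedEffects

theorem sum_filter_sub_eq_card_mul_of_isTWFEFit {n : ℕ} {ΔY : Fin n → Fin 2 → ℝ}
    {G : Fin n → Bool} {α : Fin n → ℝ} {δ : Fin 2 → ℝ} {β : ℝ}
    (hfit : IsTWFEFit ΔY (fun i t => if G i = true ∧ t = 1 then 1 else 0) α δ β) (g : Bool) :
    ∑ i ∈ univ.filter (fun i => G i = g), (ΔY i 1 - ΔY i 0)
      = #(univ.filter (fun i => G i = g)) * (δ 1 - δ 0 + if g then β else 0) := by
  set r := twfeResidual ΔY (fun i t => if G i = true ∧ t = 1 then 1 else 0) α δ β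
  have hunit : ∀ i, r i 0 + r i 1 = 0 := fun i => by
    simpa [Fin.sum_univ_two] using sum_twfeResidual_eq_zero hfit i
  have hdiff : ∀ i ∈ univ.filter (fun i => G i = g),
      ΔY i 1 - ΔY i 0 = 2 * r i 1 + (δ 1 - δ 0 + if g then β else 0) := by
    intro i hi
    rw [(mem_filter.mp hi).2.symm]
    have h := hunit i
    simp only [r, twfeResidual] at h ⊢
    cases hG : G i <;> simp [hG] at h ⊢ <;> linarith
  rw [sum_congr rfl hdiff, sum_add_distrib, ← mul_sum,
    sum_filter_twfeResidual_eq_zero rfl hfit g, sum_const, nsmul_eq_mul]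
  ring

/-- The sequential DID estimator equals the two-way fixed effects
coefficient β̂ from regressing the first-differenced outcome ΔY on unit fixed effects,
time fixed effects, and D i t = [G i ∧ t = 1] over the two differenced periods. -/
theorem sequential_did_eq_first_difference_twoway_fe
    (n : ℕ) (Y : Fin n → Fin 3 → ℝ) (G : Fin n → Bool)
    (n1 n0 : ℕ)
    (hn1 : n1 = (univ.filter (fun i => G i = true)).card)
    (hn0 : n0 = (univ.filter (fun i => G i = false)).card)
    (hn1pos : 0 < n1) (hn0pos : 0 < n0)
    (ΔY : Fin n → Fin 2 → ℝ)
    (hΔY : ∀ i (t : Fin 2), ΔY i t = Y i t.succ - Y i t.castSucc)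
    (D : Fin n → Fin 2 → ℝ)
    (hD : ∀ i (t : Fin 2), D i t = if G i = true ∧ t = 1 then (1:ℝ) else 0)
    (α : Fin n → ℝ) (δ : Fin 2 → ℝ) (β : ℝ)
    (hmin : ∀ (α' : Fin n → ℝ) (δ' : Fin 2 → ℝ) (β' : ℝ),
      ∑ i, ∑ t, (ΔY i t - α i - δ t - β * D i t)^2
      ≤ ∑ i, ∑ t, (ΔY i t - α' i - δ' t - β' * D i t)^2) :
    ((1 / (n1:ℝ)) * ∑ i ∈ univ.filter (fun i => G i = true), (Y i 2 - Y i 1)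
      - (1 / (n0:ℝ)) * ∑ i ∈ univ.filter (fun i => G i = false), (Y i 2 - Y i 1))
    - ((1 / (n1:ℝ)) * ∑ i ∈ univ.filter (fun i => G i = true), (Y i 1 - Y i 0)
      - (1 / (n0:ℝ)) * ∑ i ∈ univ.filter (fun i => G i = false), (Y i 1 - Y i 0))
    = β := by
  obtain rfl : D = fun i t => if G i = true ∧ t = 1 then 1 else 0 := funext₂ hD
  have hgroup := sum_filter_sub_eq_card_mul_of_isTWFEFit (ΔY := ΔY) hmin
  have hY : ∀ i, (Y i 2 - Y i 1) - (Y i 1 - Y i 0) = ΔY i 1 - ΔY i 0 := fun i => by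
    rw [hΔY, hΔY]; rfl
  have hn1' : (n1 : ℝ) ≠ 0 := by positivity
  have hn0' : (n0 : ℝ) ≠ 0 := by positivity
  calc _ = (1 / (n1 : ℝ)) * ∑ i ∈ univ.filter (fun i => G i = true), (ΔY i 1 - ΔY i 0)
        - (1 / (n0 : ℝ)) * ∑ i ∈ univ.filter (fun i => G i = false), (ΔY i 1 - ΔY i 0) := by
        simp only [← hY, sum_sub_distrib]; ring
    _ = β := by
        rw [hgroup true, hgroup false, ← hn1, ← hn0, if_pos rfl, if_neg Bool.false_ne_true]
        field_simp
        ring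
end

section
/- For repeated cross-sections over three periods, the sequential DID estimator equals the coefficient β̂ in the least-squares problem minimizing Σ_i Σ_{t=0}^{2} O_{it}(Y_{it} − θ₀·[G i] − θ₁·[G i]·t − γ_t − β D_{it})², i.e., a regression with a group-specific linear time trend; moreover the fitted coefficients satisfy θ̂₁ = (Σ_{G,1}Y/n₁₁ − Σ_{¬G,1}Y/n₀₁) − (Σ_{G,0}Y/n₁₀ − Σ_{¬G,0}Y/n₀₀) and γ̂_t = Σ_{¬G,t}Y/n₀_t. -/
open Finset
set_option maxHeartbeats 1000000

lemma cell_split' {n : ℕ} (f : Fin n → ℝ) (G O : Fin n → Bool) (ν : Bool → ℝ) :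
    ∑ i, (if O i then (1:ℝ) else 0) * (f i - ν (G i))^2
      = (∑ i ∈ univ.filter (fun i => G i = false ∧ O i = true), (f i - ν false)^2)
        + ∑ i ∈ univ.filter (fun i => G i = true ∧ O i = true), (f i - ν true)^2 := by
  classical
  have key : ∑ i, (if O i then (1:ℝ) else 0) * (f i - ν (G i))^2
      = ∑ i ∈ univ.filter (fun i => O i = true), (f i - ν (G i))^2 := by
    rw [Finset.sum_filter]
    refine Finset.sum_congr rfl fun i _ => ?_
    by_cases h : O i = true <;> simp [h]
  rw [key, ← Finset.sum_filter_add_sum_filter_not (univ.filter (fun i => O i = true))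
    (fun i => G i = false)]
  congr 1
  · rw [Finset.filter_filter]
    refine Finset.sum_congr ?_ ?_
    · ext i; simp [and_comm]
    · intro i hi
      simp only [Finset.mem_filter] at hi
      rw [hi.2.1]
  · rw [Finset.filter_filter]
    refine Finset.sum_congr ?_ ?_
    · ext i; simp [and_comm, Bool.not_eq_false]
    · intro i hi
      simp only [Finset.mem_filter] at hi
      rw [hi.2.1]

lemma cell_shift' {α : Type*} (s : Finset α) (f : α → ℝ) (ν m : ℝ)
    (hm : (∑ i ∈ s, f i) = (s.card : ℝ) * m) :
    ∑ i ∈ s, (f i - ν)^2 = (∑ i ∈ s, (f i - m)^2) + (s.card : ℝ) * (ν - m)^2 := by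
  have h : ∀ i ∈ s, (f i - ν)^2 = ((f i - m)^2 + (2*(m-ν))*(f i)) + (ν^2 - m^2) := by
    intros; ring
  rw [Finset.sum_congr rfl h, Finset.sum_add_distrib, Finset.sum_add_distrib,
    ← Finset.mul_sum, Finset.sum_const, nsmul_eq_mul, hm]
  ring

/-- For repeated cross-sections over three periods, the regression with a
group-specific linear time trend recovers the sequential DID estimator as β̂, with
θ̂₁ equal to the pre-period DID and γ̂_t equal to the control group-period mean. -/
theorem sequential_did_eq_group_time_trend_regression
    (n : ℕ) (Y : Fin n → Fin 3 → ℝ) (G : Fin n → Bool) (O : Fin n → Fin 3 → Bool)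
    (ncount : Bool → Fin 3 → ℕ)
    (hcount : ∀ g t, ncount g t = (univ.filter (fun i => G i = g ∧ O i t = true)).card)
    (hpos : ∀ g t, 0 < ncount g t)
    (D : Fin n → Fin 3 → ℝ)
    (hD : ∀ i t, D i t = if G i = true ∧ t = 2 then (1:ℝ) else 0)
    (θ₀ θ₁ : ℝ) (γ : Fin 3 → ℝ) (β : ℝ)
    (hmin : ∀ (θ₀' θ₁' : ℝ) (γ' : Fin 3 → ℝ) (β' : ℝ),
      ∑ i, ∑ t, (if O i t then (1:ℝ) else 0) *
        (Y i t - θ₀ * (if G i then (1:ℝ) else 0)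
          - θ₁ * (if G i then (1:ℝ) else 0) * ((t : ℕ) : ℝ) - γ t - β * D i t)^2
      ≤ ∑ i, ∑ t, (if O i t then (1:ℝ) else 0) *
        (Y i t - θ₀' * (if G i then (1:ℝ) else 0)
          - θ₁' * (if G i then (1:ℝ) else 0) * ((t : ℕ) : ℝ) - γ' t - β' * D i t)^2) :
    β = (((∑ i ∈ univ.filter (fun i => G i = true ∧ O i 2 = true), Y i 2) / ncount true 2
            - (∑ i ∈ univ.filter (fun i => G i = true ∧ O i 1 = true), Y i 1) / ncount true 1)
          - ((∑ i ∈ univ.filter (fun i => G i = false ∧ O i 2 = true), Y i 2) / ncount false 2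
            - (∑ i ∈ univ.filter (fun i => G i = false ∧ O i 1 = true), Y i 1) / ncount false 1))
        - (((∑ i ∈ univ.filter (fun i => G i = true ∧ O i 1 = true), Y i 1) / ncount true 1
            - (∑ i ∈ univ.filter (fun i => G i = true ∧ O i 0 = true), Y i 0) / ncount true 0)
          - ((∑ i ∈ univ.filter (fun i => G i = false ∧ O i 1 = true), Y i 1) / ncount false 1
            - (∑ i ∈ univ.filter (fun i => G i = false ∧ O i 0 = true), Y i 0) / ncount false 0))
    ∧ θ₁ = ((∑ i ∈ univ.filter (fun i => G i = true ∧ O i 1 = true), Y i 1) / ncount true 1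
            - (∑ i ∈ univ.filter (fun i => G i = false ∧ O i 1 = true), Y i 1) / ncount false 1)
          - ((∑ i ∈ univ.filter (fun i => G i = true ∧ O i 0 = true), Y i 0) / ncount true 0
            - (∑ i ∈ univ.filter (fun i => G i = false ∧ O i 0 = true), Y i 0) / ncount false 0)
    ∧ ∀ t, γ t = (∑ i ∈ univ.filter (fun i => G i = false ∧ O i t = true), Y i t) / ncount false t := by
  classical
  set m : Bool → Fin 3 → ℝ := fun g t =>
    (∑ i ∈ univ.filter (fun i => G i = g ∧ O i t = true), Y i t) / ncount g t with hmdef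
  set μ : Bool → Fin 3 → ℝ := fun g t =>
    θ₀ * (if g then (1:ℝ) else 0) + θ₁ * (if g then (1:ℝ) else 0) * ((t : ℕ) : ℝ) + γ t
      + β * (if g = true ∧ t = 2 then (1:ℝ) else 0) with hμdef
  have hn0 : ∀ g t, ((ncount g t : ℝ)) ≠ 0 := fun g t => Nat.cast_ne_zero.mpr (hpos g t).ne'
  have hsum : ∀ g t, (∑ i ∈ univ.filter (fun i => G i = g ∧ O i t = true), Y i t)
      = (((univ.filter (fun i => G i = g ∧ O i t = true)).card : ℝ)) * m g t := by
    intro g t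
    have h1 : m g t = (∑ i ∈ univ.filter (fun i => G i = g ∧ O i t = true), Y i t) / ncount g t := rfl
    rw [h1, ← hcount g t, mul_comm, div_mul_cancel₀ _ (hn0 g t)]
  have obj_eq : ∀ (a b : ℝ) (c : Fin 3 → ℝ) (d : ℝ) (ν : Bool → Fin 3 → ℝ),
      (∀ g t, ν g t = a * (if g then (1:ℝ) else 0)
          + b * (if g then (1:ℝ) else 0) * ((t : ℕ) : ℝ) + c t
          + d * (if g = true ∧ t = 2 then (1:ℝ) else 0)) →
      (∑ i, ∑ t, (if O i t then (1:ℝ) else 0) *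
        (Y i t - a * (if G i then (1:ℝ) else 0)
          - b * (if G i then (1:ℝ) else 0) * ((t : ℕ) : ℝ) - c t - d * D i t)^2)
      = ∑ t : Fin 3,
          ((∑ i ∈ univ.filter (fun i => G i = false ∧ O i t = true), (Y i t - ν false t)^2)
            + ∑ i ∈ univ.filter (fun i => G i = true ∧ O i t = true), (Y i t - ν true t)^2) := by
    intro a b c d ν hν
    rw [Finset.sum_comm]
    refine Finset.sum_congr rfl fun t _ => ?_
    rw [← cell_split' (fun i => Y i t) G (fun i => O i t) (fun g => ν g t)]
    refine Finset.sum_congr rfl fun i _ => ?_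
    congr 1
    simp only [hν (G i) t, hD i t]
    ring
  have decomp : ∀ ν : Bool → Fin 3 → ℝ,
      (∑ t : Fin 3,
          ((∑ i ∈ univ.filter (fun i => G i = false ∧ O i t = true), (Y i t - ν false t)^2)
            + ∑ i ∈ univ.filter (fun i => G i = true ∧ O i t = true), (Y i t - ν true t)^2))
      = (∑ t : Fin 3,
          ((∑ i ∈ univ.filter (fun i => G i = false ∧ O i t = true), (Y i t - m false t)^2)
            + ∑ i ∈ univ.filter (fun i => G i = true ∧ O i t = true), (Y i t - m true t)^2))
        + ∑ t : Fin 3, ((ncount false t : ℝ) * (ν false t - m false t)^2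
            + (ncount true t : ℝ) * (ν true t - m true t)^2) := by
    intro ν
    rw [← Finset.sum_add_distrib]
    refine Finset.sum_congr rfl fun t _ => ?_
    rw [cell_shift' _ (fun i => Y i t) (ν false t) (m false t) (hsum false t),
        cell_shift' _ (fun i => Y i t) (ν true t) (m true t) (hsum true t),
        ← hcount false t, ← hcount true t]
    ring
  set a' : ℝ := m true 0 - m false 0 with ha'
  set b' : ℝ := (m true 1 - m false 1) - (m true 0 - m false 0) with hb'
  set d' : ℝ := (m true 2 - m false 2) - a' - 2 * b' with hd'
  have hm' : ∀ g t, m g t = a' * (if g then (1:ℝ) else 0)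
      + b' * (if g then (1:ℝ) else 0) * ((t : ℕ) : ℝ) + (m false) t
      + d' * (if g = true ∧ t = 2 then (1:ℝ) else 0) := by
    intro g t
    fin_cases t <;> cases g <;>
      simp [ha', hb', hd'] <;> ring
  have key := hmin a' b' (m false) d'
  rw [obj_eq θ₀ θ₁ γ β μ (fun g t => rfl), obj_eq a' b' (m false) d' m hm', decomp μ] at key
  have hΔ : (∑ t : Fin 3, ((ncount false t : ℝ) * (μ false t - m false t)^2
      + (ncount true t : ℝ) * (μ true t - m true t)^2)) ≤ 0 := by linarith
  clear key hmin hsum hcount hD decomp hm'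
  rw [Fin.sum_univ_three] at hΔ
  have q : ∀ g t, 0 ≤ (ncount g t : ℝ) * (μ g t - m g t)^2 := fun g t => by positivity
  have zero_of : ∀ g t, (ncount g t : ℝ) * (μ g t - m g t)^2 = 0 → μ g t = m g t := by
    intro g t h
    have h2 := (mul_eq_zero.mp h).resolve_left (hn0 g t)
    have h3 : μ g t - m g t = 0 := by
      nlinarith [sq_nonneg (μ g t - m g t)]
    linarith
  have eF0 : μ false 0 = m false 0 := zero_of false 0 (le_antisymm
    (by linarith [q false 0, q true 0, q false 1, q true 1, q false 2, q true 2]) (q false 0))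
  have eT0 : μ true 0 = m true 0 := zero_of true 0 (le_antisymm
    (by linarith [q false 0, q true 0, q false 1, q true 1, q false 2, q true 2]) (q true 0))
  have eF1 : μ false 1 = m false 1 := zero_of false 1 (le_antisymm
    (by linarith [q false 0, q true 0, q false 1, q true 1, q false 2, q true 2]) (q false 1))
  have eT1 : μ true 1 = m true 1 := zero_of true 1 (le_antisymm
    (by linarith [q false 0, q true 0, q false 1, q true 1, q false 2, q true 2]) (q true 1))
  have eF2 : μ false 2 = m false 2 := zero_of false 2 (le_antisymm
    (by linarith [q false 0, q true 0, q false 1, q true 1, q false 2, q true 2]) (q false 2))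
  have eT2 : μ true 2 = m true 2 := zero_of true 2 (le_antisymm
    (by linarith [q false 0, q true 0, q false 1, q true 1, q false 2, q true 2]) (q true 2))
  simp only [hμdef] at eF0 eT0 eF1 eT1 eF2 eT2
  norm_num [show ¬((0:Fin 3) = 2) from by decide, show ¬((1:Fin 3) = 2) from by decide]
    at eF0 eT0 eF1 eT1 eF2 eT2
  refine ⟨?_, ?_, ?_⟩
  · show β = ((m true 2 - m true 1) - (m false 2 - m false 1))
        - ((m true 1 - m true 0) - (m false 1 - m false 0))
    linarith [eF0, eT0, eF1, eT1, eF2, eT2]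
  · show θ₁ = (m true 1 - m false 1) - (m true 0 - m false 0)
    linarith [eF0, eT0, eF1, eT1, eF2, eT2]
  · intro t
    show γ t = m false t
    fin_cases t
    · exact eF0
    · exact eF1
    · exact eF2
end

section
/- Consider the two-period panel regression of Y on unit fixed effects, time fixed effects, the contemporaneous treatment D_{it} (identically zero on t ∈ {0,1}), and the lead D_{i,t+1} = [G i ∧ t = 1]. The coefficient ζ̂ on the lead equals the DID estimator applied to the pre-treatment periods: (1/n₁)Σ_{G}(Y_{i1}−Y_{i0}) − (1/n₀)Σ_{¬G}(Y_{i1}−Y_{i0}). -/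
open Finset

lemma quad_zero (A B : ℝ) (hA : 0 ≤ A) (h : ∀ ε : ℝ, 0 ≤ A * ε^2 + B * ε) : B = 0 := by
  rcases eq_or_lt_of_le hA with hA0 | hApos
  · have h1 := h 1
    have h2 := h (-1)
    rw [← hA0] at h1 h2
    simp at h1 h2
    linarith
  · have h1 := h (-B / (2*A))
    have h2 : (-B / (2*A))^2 = B^2 / (4*A^2) := by
      rw [div_pow]; ring_nf
    rw [h2] at h1
    have hB2 : B^2 ≤ 0 := by
      have e : A * (B^2 / (4*A^2)) + B * (-B / (2*A)) = -B^2/(4*A) := by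
        field_simp
        ring
      rw [e] at h1
      have h4A : 0 < 4*A := by linarith
      rw [le_div_iff₀ h4A] at h1
      nlinarith
    nlinarith [sq_nonneg B]

/-- In the two-way fixed effects regression over the pre-treatment periods
including the contemporaneous treatment D (identically zero) and the lead
D_{i,t+1} = [G i ∧ t = 1], the coefficient ζ̂ on the lead equals the DID estimator
applied to the pre-treatment periods. -/
theorem leads_test_eq_pretreatment_did
    (n : ℕ) (Y : Fin n → Fin 2 → ℝ) (G : Fin n → Bool)
    (n1 n0 : ℕ)
    (hn1 : n1 = (univ.filter (fun i => G i = true)).card)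
    (hn0 : n0 = (univ.filter (fun i => G i = false)).card)
    (hn1pos : 0 < n1) (hn0pos : 0 < n0)
    (D : Fin n → Fin 2 → ℝ) (hDzero : ∀ i t, D i t = 0)
    (Dlead : Fin n → Fin 2 → ℝ)
    (hDlead : ∀ i t, Dlead i t = if G i = true ∧ t = 1 then (1:ℝ) else 0)
    (α : Fin n → ℝ) (δ : Fin 2 → ℝ) (β ζ : ℝ)
    (hmin : ∀ (α' : Fin n → ℝ) (δ' : Fin 2 → ℝ) (β' ζ' : ℝ),
      ∑ i, ∑ t, (Y i t - α i - δ t - β * D i t - ζ * Dlead i t)^2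
      ≤ ∑ i, ∑ t, (Y i t - α' i - δ' t - β' * D i t - ζ' * Dlead i t)^2) :
    ζ = (1 / (n1:ℝ)) * ∑ i ∈ univ.filter (fun i => G i = true), (Y i 1 - Y i 0)
      - (1 / (n0:ℝ)) * ∑ i ∈ univ.filter (fun i => G i = false), (Y i 1 - Y i 0) := by
  classical
  set r : Fin n → Fin 2 → ℝ := fun i t => Y i t - α i - δ t - β * D i t - ζ * Dlead i t with hr
  -- general first order condition
  have foc : ∀ (a : Fin n → ℝ) (d : Fin 2 → ℝ) (b z : ℝ),
      ∑ i, ∑ t, r i t * (a i + d t + b * D i t + z * Dlead i t) = 0 := by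
    intro a d b z
    set g : Fin n → Fin 2 → ℝ := fun i t => a i + d t + b * D i t + z * Dlead i t with hg
    have key : ∀ ε : ℝ,
        0 ≤ (∑ i, ∑ t, (g i t)^2) * ε^2 + (-2 * ∑ i, ∑ t, r i t * g i t) * ε := by
      intro ε
      have h1 := hmin (fun i => α i + ε * a i) (fun t => δ t + ε * d t) (β + ε * b) (ζ + ε * z)
      have h2 : ∀ i ∈ (univ : Finset (Fin n)), ∑ t, (Y i t - (α i + ε * a i) - (δ t + ε * d t)
            - (β + ε * b) * D i t - (ζ + ε * z) * Dlead i t)^2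
          = ∑ t, ((r i t)^2 + ((g i t)^2 * ε^2 + (-2 * (r i t * g i t)) * ε)) :=
        fun i _ => Finset.sum_congr rfl (fun t _ => by simp only [hr, hg]; ring)
      rw [Finset.sum_congr rfl h2] at h1
      have hL : (∑ i, ∑ t, (Y i t - α i - δ t - β * D i t - ζ * Dlead i t)^2)
          = ∑ i, ∑ t, (r i t)^2 := rfl
      rw [hL] at h1
      simp only [Finset.sum_add_distrib, Finset.sum_mul, Finset.mul_sum] at h1 ⊢
      linarith
    have hA : 0 ≤ ∑ i, ∑ t, (g i t)^2 := by positivity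
    have := quad_zero _ _ hA key
    linarith
  -- shorthand sums
  have hsplit : ∀ f : Fin n → ℝ,
      (∑ i ∈ univ.filter (fun i => G i = true), f i)
      + (∑ i ∈ univ.filter (fun i => G i = false), f i) = ∑ i, f i := by
    intro f
    have := Finset.sum_filter_add_sum_filter_not univ (fun i => G i = true) f
    simpa [Bool.not_eq_true] using this
  have h01 : ((0 : Fin 2) = 1) = False := by simp [Fin.ext_iff]
  -- FOC wrt ζ : sum of r i 1 over treated = 0
  have S1 : ∑ i ∈ univ.filter (fun i => G i = true), r i 1 = 0 := by
    have h := foc (fun _ => 0) (fun _ => 0) 0 1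
    simp only [hDlead, Fin.sum_univ_two, zero_add, zero_mul, add_zero, one_mul,
      h01, and_false, and_true, if_false, mul_ite, mul_one, mul_zero] at h
    rw [Finset.sum_filter]
    exact h
  -- FOC wrt δ 1 : sum of r i 1 over all = 0
  have S2 : ∑ i, r i 1 = 0 := by
    have h := foc (fun _ => 0) (fun t => if t = 1 then 1 else 0) 0 0
    simpa [Fin.sum_univ_two, h01] using h
  -- FOC wrt treated fixed effects
  have S3 : (∑ i ∈ univ.filter (fun i => G i = true), r i 0)
      + (∑ i ∈ univ.filter (fun i => G i = true), r i 1) = 0 := by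
    have h := foc (fun i => if G i = true then 1 else 0) (fun _ => 0) 0 0
    simp only [Fin.sum_univ_two, add_zero, zero_mul, mul_ite, mul_one, mul_zero] at h
    rw [Finset.sum_filter, Finset.sum_filter, ← Finset.sum_add_distrib]
    exact h
  -- FOC wrt control fixed effects
  have S4 : (∑ i ∈ univ.filter (fun i => G i = false), r i 0)
      + (∑ i ∈ univ.filter (fun i => G i = false), r i 1) = 0 := by
    have h := foc (fun i => if G i = false then 1 else 0) (fun _ => 0) 0 0
    simp only [Fin.sum_univ_two, add_zero, zero_mul, mul_ite, mul_one, mul_zero] at h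
    rw [Finset.sum_filter, Finset.sum_filter, ← Finset.sum_add_distrib]
    exact h
  -- derived group equations
  have C1 : ∑ i ∈ univ.filter (fun i => G i = false), r i 1 = 0 := by
    have := hsplit (fun i => r i 1)
    rw [S1, S2] at this; linarith
  have T0 : ∑ i ∈ univ.filter (fun i => G i = true), r i 0 = 0 := by linarith
  have C0 : ∑ i ∈ univ.filter (fun i => G i = false), r i 0 = 0 := by linarith
  -- rewrite residual sums explicitly
  have eT1 : ∑ i ∈ univ.filter (fun i => G i = true), r i 1
      = (∑ i ∈ univ.filter (fun i => G i = true), (Y i 1 - α i)) - n1 * (δ 1 + ζ) := by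
    rw [hn1]
    rw [show ∑ i ∈ univ.filter (fun i => G i = true), r i 1
        = ∑ i ∈ univ.filter (fun i => G i = true), ((Y i 1 - α i) - (δ 1 + ζ)) from
      Finset.sum_congr rfl (fun i hi => by
        have hGi := (Finset.mem_filter.mp hi).2
        simp [hr, hDzero, hDlead, hGi]; try ring)]
    rw [Finset.sum_sub_distrib, Finset.sum_const, nsmul_eq_mul]
  have eT0 : ∑ i ∈ univ.filter (fun i => G i = true), r i 0
      = (∑ i ∈ univ.filter (fun i => G i = true), (Y i 0 - α i)) - n1 * δ 0 := by
    rw [hn1]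
    rw [show ∑ i ∈ univ.filter (fun i => G i = true), r i 0
        = ∑ i ∈ univ.filter (fun i => G i = true), ((Y i 0 - α i) - δ 0) from
      Finset.sum_congr rfl (fun i hi => by
        simp [hr, hDzero, hDlead, h01]; try ring)]
    rw [Finset.sum_sub_distrib, Finset.sum_const, nsmul_eq_mul]
  have eC1 : ∑ i ∈ univ.filter (fun i => G i = false), r i 1
      = (∑ i ∈ univ.filter (fun i => G i = false), (Y i 1 - α i)) - n0 * δ 1 := by
    rw [hn0]
    rw [show ∑ i ∈ univ.filter (fun i => G i = false), r i 1
        = ∑ i ∈ univ.filter (fun i => G i = false), ((Y i 1 - α i) - δ 1) from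
      Finset.sum_congr rfl (fun i hi => by
        have hGi := (Finset.mem_filter.mp hi).2
        simp [hr, hDzero, hDlead, hGi]; try ring)]
    rw [Finset.sum_sub_distrib, Finset.sum_const, nsmul_eq_mul]
  have eC0 : ∑ i ∈ univ.filter (fun i => G i = false), r i 0
      = (∑ i ∈ univ.filter (fun i => G i = false), (Y i 0 - α i)) - n0 * δ 0 := by
    rw [hn0]
    rw [show ∑ i ∈ univ.filter (fun i => G i = false), r i 0
        = ∑ i ∈ univ.filter (fun i => G i = false), ((Y i 0 - α i) - δ 0) from
      Finset.sum_congr rfl (fun i hi => by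
        simp [hr, hDzero, hDlead, h01]; try ring)]
    rw [Finset.sum_sub_distrib, Finset.sum_const, nsmul_eq_mul]
  rw [eT1] at S1; rw [eT0] at T0; rw [eC1] at C1; rw [eC0] at C0
  -- express goal sums
  have gT : ∑ i ∈ univ.filter (fun i => G i = true), (Y i 1 - Y i 0)
      = (∑ i ∈ univ.filter (fun i => G i = true), (Y i 1 - α i))
        - (∑ i ∈ univ.filter (fun i => G i = true), (Y i 0 - α i)) := by
    rw [← Finset.sum_sub_distrib]
    exact Finset.sum_congr rfl (fun i _ => by ring)
  have gC : ∑ i ∈ univ.filter (fun i => G i = false), (Y i 1 - Y i 0)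
      = (∑ i ∈ univ.filter (fun i => G i = false), (Y i 1 - α i))
        - (∑ i ∈ univ.filter (fun i => G i = false), (Y i 0 - α i)) := by
    rw [← Finset.sum_sub_distrib]
    exact Finset.sum_congr rfl (fun i _ => by ring)
  rw [gT, gC]
  have e1 : ∑ i ∈ univ.filter (fun i => G i = true), (Y i 1 - α i) = (n1:ℝ) * (δ 1 + ζ) := by
    linarith
  have e2 : ∑ i ∈ univ.filter (fun i => G i = true), (Y i 0 - α i) = (n1:ℝ) * δ 0 := by
    linarith
  have e3 : ∑ i ∈ univ.filter (fun i => G i = false), (Y i 1 - α i) = (n0:ℝ) * δ 1 := by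
    linarith
  have e4 : ∑ i ∈ univ.filter (fun i => G i = false), (Y i 0 - α i) = (n0:ℝ) * δ 0 := by
    linarith
  rw [e1, e2, e3, e4]
  have hn1' : (n1 : ℝ) ≠ 0 := by positivity
  have hn0' : (n0 : ℝ) ≠ 0 := by positivity
  field_simp
  ring
end

section
/- Let Ω be a symmetric positive definite 2×2 real matrix and M = (1,1)ᵀ. Among all symmetric positive definite weight matrices W, the GMM sandwich variance V(W) = (MᵀWM)⁻¹ MᵀWΩWᵀM (MᵀWM)⁻¹ is minimized at W = Ω⁻¹, and the minimum value is (MᵀΩ⁻¹M)⁻¹; i.e., for every such W, (MᵀΩ⁻¹M)⁻¹ ≤ V(W). -/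
/-!
With `x = Wᵀ M`, the sandwich variance is `(xᵀ Ω x) / (xᵀ M)²`. Writing `xᵀ M = xᵀ Ω (Ω⁻¹ M)`,
the Cauchy–Schwarz inequality for the positive semidefinite form `Ω` gives
`(xᵀ M)² ≤ (xᵀ Ω x) (Mᵀ Ω⁻¹ M)`, i.e. `V(W) ≥ (Mᵀ Ω⁻¹ M)⁻¹`, with equality at `x = Ω⁻¹ M`.
-/

open Matrix

variable {n : Type*} [Fintype n]

noncomputable def sandwichVariance (Ω : Matrix n n ℝ) (m : n → ℝ) (W : Matrix n n ℝ) : ℝ :=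
  (m ⬝ᵥ W *ᵥ m)⁻¹ * (m ⬝ᵥ (W * Ω * Wᵀ) *ᵥ m) * (m ⬝ᵥ W *ᵥ m)⁻¹

lemma dotProduct_mul_mul_transpose_mulVec (W Ω : Matrix n n ℝ) (m : n → ℝ) :
    m ⬝ᵥ (W * Ω * Wᵀ) *ᵥ m = (m ᵥ* W) ⬝ᵥ Ω *ᵥ (m ᵥ* W) := by
  rw [← mulVec_mulVec, ← mulVec_mulVec, mulVec_transpose, dotProduct_mulVec]

lemma sandwichVariance_eq_div_sq (Ω W : Matrix n n ℝ) (m : n → ℝ) :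
    sandwichVariance Ω m W = (m ᵥ* W) ⬝ᵥ Ω *ᵥ (m ᵥ* W) / ((m ᵥ* W) ⬝ᵥ m) ^ 2 := by
  rw [sandwichVariance, dotProduct_mul_mul_transpose_mulVec, dotProduct_mulVec]
  ring

variable [DecidableEq n]

lemma Matrix.PosSemidef.dotProduct_mulVec_mul_le {A : Matrix n n ℝ} (hA : A.PosSemidef)
    (x y : n → ℝ) : (x ⬝ᵥ A *ᵥ y) * (y ⬝ᵥ A *ᵥ x) ≤ (x ⬝ᵥ A *ᵥ x) * (y ⬝ᵥ A *ᵥ y) := by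
  simpa only [toLinearMap₂'_apply'] using
    LinearMap.BilinForm.apply_mul_apply_le_of_forall_zero_le (toLinearMap₂' ℝ A)
      (fun z ↦ by
        simpa only [toLinearMap₂'_apply', star_trivial] using hA.dotProduct_mulVec_nonneg z) x y

lemma Matrix.PosDef.sq_dotProduct_le {Ω : Matrix n n ℝ} (hΩ : Ω.PosDef) (x m : n → ℝ) :
    (x ⬝ᵥ m) ^ 2 ≤ (x ⬝ᵥ Ω *ᵥ x) * (m ⬝ᵥ Ω⁻¹ *ᵥ m) := by
  have hdet : IsUnit Ω.det := isUnit_iff_ne_zero.mpr hΩ.det_pos.ne'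
  have hΩt : Ωᵀ = Ω := by simpa using hΩ.isHermitian.eq
  set y := Ω⁻¹ *ᵥ m
  have hy : Ω *ᵥ y = m := by rw [mulVec_mulVec, mul_nonsing_inv _ hdet, one_mulVec]
  have hyx : y ⬝ᵥ Ω *ᵥ x = x ⬝ᵥ m := by
    rw [dotProduct_mulVec, ← mulVec_transpose, hΩt, hy, dotProduct_comm]
  have h := hΩ.posSemidef.dotProduct_mulVec_mul_le x y
  rwa [hy, hyx, ← sq, dotProduct_comm y] at h

lemma sandwichVariance_nonsing_inv {Ω : Matrix n n ℝ} (hΩ : Ω.IsSymm) (hdet : IsUnit Ω.det)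
    (m : n → ℝ) : sandwichVariance Ω m Ω⁻¹ = (m ⬝ᵥ Ω⁻¹ *ᵥ m)⁻¹ := by
  have hinv : Ω⁻¹ * Ω * Ω⁻¹ᵀ = Ω⁻¹ := by
    rw [transpose_nonsing_inv, hΩ.eq, nonsing_inv_mul _ hdet, one_mul]
  rw [sandwichVariance, hinv]
  grind

lemma Matrix.PosDef.inv_dotProduct_inv_mulVec_le_div_sq {Ω : Matrix n n ℝ} (hΩ : Ω.PosDef)
    {x m : n → ℝ} (hx : x ⬝ᵥ m ≠ 0) :
    (m ⬝ᵥ Ω⁻¹ *ᵥ m)⁻¹ ≤ (x ⬝ᵥ Ω *ᵥ x) / (x ⬝ᵥ m) ^ 2 := by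
  have ha : 0 ≤ m ⬝ᵥ Ω⁻¹ *ᵥ m := hΩ.posSemidef.inv.dotProduct_mulVec_nonneg m
  rcases ha.eq_or_lt with ha | ha
  · rw [← ha, _root_.inv_zero]
    exact div_nonneg (hΩ.posSemidef.dotProduct_mulVec_nonneg x) (sq_nonneg _)
  · rw [inv_le_iff_one_le_mul₀' ha, mul_div_assoc', le_div_iff₀ (by positivity), one_mul,
      mul_comm]
    exact hΩ.sq_dotProduct_le x m

lemma inv_le_sandwichVariance {Ω W : Matrix n n ℝ} (hΩ : Ω.PosDef) (hW : W.PosDef) (m : n → ℝ) :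
    (m ⬝ᵥ Ω⁻¹ *ᵥ m)⁻¹ ≤ sandwichVariance Ω m W := by
  rcases eq_or_ne m 0 with rfl | hm
  · simp [sandwichVariance]
  · rw [sandwichVariance_eq_div_sq]
    refine hΩ.inv_dotProduct_inv_mulVec_le_div_sq ?_
    rw [← dotProduct_mulVec]
    exact (hW.dotProduct_mulVec_pos hm).ne'

theorem gmm_optimal_weight_minimizes_sandwich_variance_general
    (Ω : Matrix (Fin 2) (Fin 2) ℝ) (hΩ : Ω.PosDef)
    (M : Fin 2 → ℝ)
    (V : Matrix (Fin 2) (Fin 2) ℝ → ℝ)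
    (hV : ∀ W, V W = (M ⬝ᵥ W.mulVec M)⁻¹ * (M ⬝ᵥ (W * Ω * Wᵀ).mulVec M)
                      * (M ⬝ᵥ W.mulVec M)⁻¹) :
    V Ω⁻¹ = (M ⬝ᵥ (Ω⁻¹).mulVec M)⁻¹
    ∧ ∀ W : Matrix (Fin 2) (Fin 2) ℝ, W.PosDef →
        (M ⬝ᵥ (Ω⁻¹).mulVec M)⁻¹ ≤ V W := by
  obtain rfl : V = sandwichVariance Ω M := funext hV
  have hΩsymm : Ω.IsSymm := by simpa using hΩ.isHermitian
  exact ⟨sandwichVariance_nonsing_inv hΩsymm (isUnit_iff_ne_zero.mpr hΩ.det_pos.ne') M,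
    fun W hW ↦ inv_le_sandwichVariance hΩ hW M⟩

/-- Among symmetric positive definite weight matrices W, the GMM sandwich
variance V(W) = (MᵀWM)⁻¹ MᵀWΩWᵀM (MᵀWM)⁻¹ with M = (1,1)ᵀ is minimized at W = Ω⁻¹,
where it equals (MᵀΩ⁻¹M)⁻¹. -/
theorem gmm_optimal_weight_minimizes_sandwich_variance
    (Ω : Matrix (Fin 2) (Fin 2) ℝ) (hΩ : Ω.PosDef)
    (M : Fin 2 → ℝ) (hM : M = ![1, 1])
    (V : Matrix (Fin 2) (Fin 2) ℝ → ℝ)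
    (hV : ∀ W, V W = (M ⬝ᵥ W.mulVec M)⁻¹ * (M ⬝ᵥ (W * Ω * Wᵀ).mulVec M)
                      * (M ⬝ᵥ W.mulVec M)⁻¹) :
    V Ω⁻¹ = (M ⬝ᵥ (Ω⁻¹).mulVec M)⁻¹
    ∧ ∀ W : Matrix (Fin 2) (Fin 2) ℝ, W.PosDef →
        (M ⬝ᵥ (Ω⁻¹).mulVec M)⁻¹ ≤ V W :=
  gmm_optimal_weight_minimizes_sandwich_variance_general Ω hΩ M V hV
end

section
/- Let Ω = [[v₁, c],[c, v₂]] be positive definite and 𝟙 = (1,1)ᵀ. The minimizer of τ ↦ (τ𝟙 − τ̂)ᵀ Ω⁻¹ (τ𝟙 − τ̂) over τ ∈ ℝ, where τ̂ = (τ̂₁, τ̂₂)ᵀ, is the weighted average w₁τ̂₁ + w₂τ̂₂ with w₁ = (v₂ − c)/(v₁ + v₂ − 2c) and w₂ = (v₁ − c)/(v₁ + v₂ − 2c), and w₁ + w₂ = 1. -/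
/-!
With weight matrix `W = Ω⁻¹`, the objective `f τ = (τ𝟙 - τ̂)ᵀ W (τ𝟙 - τ̂)` is a quadratic in `τ`
with leading coefficient `𝟙ᵀW𝟙 > 0`; completing the square shows it is minimized at
`𝟙ᵀWτ̂ / 𝟙ᵀW𝟙`. Writing `W` via the adjugate of `Ω`, the factor `1 / det Ω` cancels in this ratio,
leaving the weights `(v₂ - c, v₁ - c) / (v₁ + v₂ - 2c)`.
-/

open Matrix

namespace Matrix

variable {n : Type*} [Fintype n]

/-- The weighted least-squares solution of `τ • u ≈ t` in the metric `W`. -/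
noncomputable def gmmEstimate (W : Matrix n n ℝ) (u t : n → ℝ) : ℝ :=
  (u ⬝ᵥ W *ᵥ t) / (u ⬝ᵥ W *ᵥ u)

theorem IsSymm.dotProduct_mulVec_comm {R : Type*} [CommSemiring R] {A : Matrix n n R}
    (hA : A.IsSymm) (x y : n → R) : x ⬝ᵥ A *ᵥ y = y ⬝ᵥ A *ᵥ x := by
  rw [dotProduct_mulVec, dotProduct_comm, ← mulVec_transpose, hA.eq]

theorem IsSymm.quadForm_smul_sub {A : Matrix n n ℝ} (hA : A.IsSymm) (u t : n → ℝ) (τ : ℝ) :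
    (τ • u - t) ⬝ᵥ A *ᵥ (τ • u - t) =
      (u ⬝ᵥ A *ᵥ u) * τ ^ 2 - 2 * (u ⬝ᵥ A *ᵥ t) * τ + t ⬝ᵥ A *ᵥ t := by
  simp only [mulVec_sub, mulVec_smul, dotProduct_sub, sub_dotProduct, dotProduct_smul,
    smul_dotProduct, smul_eq_mul, hA.dotProduct_mulVec_comm t u]
  ring

theorem IsSymm.quadForm_smul_sub_eq_gmmEstimate_add {A : Matrix n n ℝ} (hA : A.IsSymm)
    {u : n → ℝ} (t : n → ℝ) (hu : u ⬝ᵥ A *ᵥ u ≠ 0) (τ : ℝ) :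
    (τ • u - t) ⬝ᵥ A *ᵥ (τ • u - t) =
      (gmmEstimate A u t • u - t) ⬝ᵥ A *ᵥ (gmmEstimate A u t • u - t) +
        (u ⬝ᵥ A *ᵥ u) * (τ - gmmEstimate A u t) ^ 2 := by
  rw [hA.quadForm_smul_sub, hA.quadForm_smul_sub, gmmEstimate]
  field_simp
  ring

theorem PosDef.quadForm_gmmEstimate_le {A : Matrix n n ℝ} (hA : A.PosDef) {u : n → ℝ}
    (hu : u ≠ 0) (t : n → ℝ) (τ : ℝ) :
    (gmmEstimate A u t • u - t) ⬝ᵥ A *ᵥ (gmmEstimate A u t • u - t) ≤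
      (τ • u - t) ⬝ᵥ A *ᵥ (τ • u - t) := by
  have hpos : 0 < u ⬝ᵥ A *ᵥ u := by simpa using hA.dotProduct_mulVec_pos hu
  have hsymm : A.IsSymm := isHermitian_iff_isSymm.mp hA.isHermitian
  rw [hsymm.quadForm_smul_sub_eq_gmmEstimate_add t hpos.ne' τ]
  exact le_add_of_nonneg_right (mul_nonneg hpos.le (sq_nonneg _))

theorem PosDef.two_mul_lt_add_of_fin_two {a b c : ℝ} (h : !![a, c; c, b].PosDef) :
    2 * c < a + b := by
  have hx : ![(1 : ℝ), -1] ≠ 0 := fun hx => by simpa using congrFun hx 0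
  have := h.dotProduct_mulVec_pos hx
  simp only [star_trivial, mulVec, dotProduct, Fin.sum_univ_two, Fin.isValue, cons_val_zero,
    cons_val_one, cons_val', cons_val_fin_one, of_apply, mul_one, one_mul, mul_neg, neg_mul] at this
  linarith

theorem gmmEstimate_smul (W : Matrix n n ℝ) {k : ℝ} (hk : k ≠ 0) (u t : n → ℝ) :
    gmmEstimate (k • W) u t = gmmEstimate W u t := by
  simp only [gmmEstimate, smul_mulVec, dotProduct_smul, smul_eq_mul, mul_div_mul_left _ _ hk]

theorem gmmEstimate_inv_fin_two {a b c : ℝ} (hdet : a * b - c * c ≠ 0) (t₁ t₂ : ℝ) :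
    gmmEstimate !![a, c; c, b]⁻¹ 1 ![t₁, t₂] = ((b - c) * t₁ + (a - c) * t₂) / (a + b - 2 * c) := by
  rw [inv_def, adjugate_fin_two_of, det_fin_two_of, Ring.inverse_eq_inv,
    gmmEstimate_smul _ (inv_ne_zero hdet), gmmEstimate]
  simp only [dotProduct, Pi.one_apply, mulVec, of_apply, cons_val', cons_val_fin_one,
    Fin.sum_univ_two, Fin.isValue, cons_val_zero, cons_val_one, one_mul, neg_mul, mul_one]
  ring

end Matrix

/-- The minimizer of the GMM objective with the optimal weight matrix
Ω⁻¹ is the weighted average w₁tau₁ + w₂tau₂ with w₁ = (v₂−c)/(v₁+v₂−2c),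
w₂ = (v₁−c)/(v₁+v₂−2c), and w₁ + w₂ = 1. -/
theorem double_did_closed_form_weights
    (v₁ v₂ c : ℝ)
    (hΩ : (!![v₁, c; c, v₂] : Matrix (Fin 2) (Fin 2) ℝ).PosDef)
    (tau₁ tau₂ : ℝ)
    (f : ℝ → ℝ)
    (hf : ∀ τ, f τ = ![τ - tau₁, τ - tau₂] ⬝ᵥ
        ((!![v₁, c; c, v₂] : Matrix (Fin 2) (Fin 2) ℝ)⁻¹).mulVec ![τ - tau₁, τ - tau₂])
    (w₁ w₂ : ℝ)
    (hw₁ : w₁ = (v₂ - c) / (v₁ + v₂ - 2 * c))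
    (hw₂ : w₂ = (v₁ - c) / (v₁ + v₂ - 2 * c)) :
    w₁ + w₂ = 1 ∧ ∀ τ : ℝ, f (w₁ * tau₁ + w₂ * tau₂) ≤ f τ := by
  have hsum : v₁ + v₂ - 2 * c ≠ 0 := (sub_pos.mpr hΩ.two_mul_lt_add_of_fin_two).ne'
  have hdet : v₁ * v₂ - c * c ≠ 0 := by
    simpa [det_fin_two_of] using hΩ.det_pos.ne'
  have hline : ∀ τ : ℝ, ![τ - tau₁, τ - tau₂] = τ • (1 : Fin 2 → ℝ) - ![tau₁, tau₂] := by
    intro τ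
    ext i
    fin_cases i <;> simp
  have hest : w₁ * tau₁ + w₂ * tau₂ = gmmEstimate !![v₁, c; c, v₂]⁻¹ 1 ![tau₁, tau₂] := by
    rw [gmmEstimate_inv_fin_two hdet, hw₁, hw₂]
    ring
  refine ⟨?_, fun τ => ?_⟩
  · rw [hw₁, hw₂, ← add_div, div_eq_one_iff_eq hsum]
    ring
  · rw [hf, hf, hline, hline, hest]
    exact hΩ.inv.quadForm_gmmEstimate_le one_ne_zero _ τ
end
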